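/- Let G be a strongly connected directed graph with all distances between distinct vertices at most 2, and let V1, V2 ⊆ V(G) be disjoint sets with (x,y) ∈ E(G) for every x ∈ V1, y ∈ V2 and (y,x) ∉ E(G) for every y ∈ V2, x ∈ V1. Let R1 ⊆ V1 and R2 ⊆ V2 be nonempty. If there is a 1-vertex u1 ∈ V1 \ R1 w.r.t. R1 and a 2-vertex u2 ∈ V2 \ R2 w.r.t. R2, then no vertex of R1 ∪ R2 resolves u1 and u2, so R1 ∪ R2 does not resolve V1 ∪ V2 in G. -/

import Mathlib

universe u

/-- There is a directed walk of length `n` from `u` to `v` in the digraph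
with edge relation `E`. -/
def HasWalkLen {V : Type u} (E : V → V → Prop) (u v : V) (n : ℕ) : Prop :=
  ∃ f : Fin (n + 1) → V, f 0 = u ∧ f (Fin.last n) = v ∧
    ∀ i : Fin n, E (f i.castSucc) (f i.succ)

/-- `v` is reachable from `u` by a directed walk. -/
def Reaches {V : Type u} (E : V → V → Prop) (u v : V) : Prop :=
  ∃ n, HasWalkLen E u v n

/-- Directed distance from `u` to `v` (length of a shortest directed path);
a junk value (`sInf ∅ = 0`) if `v` is unreachable from `u`. -/
noncomputable def ddist {V : Type u} (E : V → V → Prop) (u v : V) : ℕ :=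
  sInf {n | HasWalkLen E u v n}

/-- `w` resolves the vertices `u` and `v`: `w = u`, or `w = v`, or both
distances from `w` are defined (reachable) and different. -/
def Resolves {V : Type u} (E : V → V → Prop) (w u v : V) : Prop :=
  w = u ∨ w = v ∨
    (Reaches E w u ∧ Reaches E w v ∧ ddist E w u ≠ ddist E w v)

/-- `R` resolves the vertex set `U`: every pair of distinct vertices of `U`
is resolved by some member of `R`. -/
def ResolvesSet {V : Type u} (E : V → V → Prop) (R U : Set V) : Prop :=
  ∀ u ∈ U, ∀ v ∈ U, u ≠ v → ∃ w ∈ R, Resolves E w u v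

/-- The digraph is strongly connected on the vertex set `S`. -/
def SConn {V : Type u} (E : V → V → Prop) (S : Set V) : Prop :=
  ∀ u ∈ S, ∀ v ∈ S, Reaches E u v

/-- `u` is a 1-vertex w.r.t. `R`: `u ∉ R` and every `w ∈ R` has an edge to `u`. -/
def OneVertex {V : Type u} (E : V → V → Prop) (R : Set V) (u : V) : Prop :=
  u ∉ R ∧ ∀ w ∈ R, E w u

/-- `u` is a 2-vertex w.r.t. `R`: `u ∉ R` and no `w ∈ R` has an edge to `u`. -/
def TwoVertex {V : Type u} (E : V → V → Prop) (R : Set V) (u : V) : Prop :=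
  u ∉ R ∧ ∀ w ∈ R, ¬ E w u

/-- Directed co-graphs with vertex set `S` and edge relation `E`, built
inductively from single vertices by disjoint union, join and directed join. -/
inductive IsDicograph {V : Type u} : Set V → (V → V → Prop) → Prop
  | single (v : V) : IsDicograph {v} fun _ _ => False
  | disjUnion {S₁ S₂ : Set V} {E₁ E₂ : V → V → Prop} :
      IsDicograph S₁ E₁ → IsDicograph S₂ E₂ → Disjoint S₁ S₂ →
      IsDicograph (S₁ ∪ S₂) fun u v => E₁ u v ∨ E₂ u v
  | join {S₁ S₂ : Set V} {E₁ E₂ : V → V → Prop} :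
      IsDicograph S₁ E₁ → IsDicograph S₂ E₂ → Disjoint S₁ S₂ →
      IsDicograph (S₁ ∪ S₂) fun u v =>
        E₁ u v ∨ E₂ u v ∨ (u ∈ S₁ ∧ v ∈ S₂) ∨ (u ∈ S₂ ∧ v ∈ S₁)
  | dirJoin {S₁ S₂ : Set V} {E₁ E₂ : V → V → Prop} :
      IsDicograph S₁ E₁ → IsDicograph S₂ E₂ → Disjoint S₁ S₂ →
      IsDicograph (S₁ ∪ S₂) fun u v => E₁ u v ∨ E₂ u v ∨ (u ∈ S₁ ∧ v ∈ S₂)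

section Distance

variable {V : Type u} {E : V → V → Prop} {u v : V}

lemma hasWalkLen_zero_iff : HasWalkLen E u v 0 ↔ u = v := by
  constructor
  · rintro ⟨f, rfl, rfl, -⟩
    rfl
  · rintro rfl
    exact ⟨fun _ => u, rfl, rfl, fun i => i.elim0⟩

lemma hasWalkLen_one_iff : HasWalkLen E u v 1 ↔ E u v := by
  constructor
  · rintro ⟨f, rfl, rfl, hf⟩
    exact hf 0
  · intro h
    exact ⟨![u, v], rfl, rfl, fun i => by simpa [Subsingleton.elim i 0] using h⟩

lemma Reaches.hasWalkLen_ddist (h : Reaches E u v) : HasWalkLen E u v (ddist E u v) :=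
  Nat.sInf_mem h

lemma Reaches.ddist_ne_zero (h : Reaches E u v) (hne : u ≠ v) : ddist E u v ≠ 0 := fun h0 =>
  hne (hasWalkLen_zero_iff.mp (h0 ▸ h.hasWalkLen_ddist))

lemma ddist_eq_one (hne : u ≠ v) (huv : E u v) : ddist E u v = 1 := by
  have hle : ddist E u v ≤ 1 := Nat.sInf_le (hasWalkLen_one_iff.mpr huv)
  have hne0 := Reaches.ddist_ne_zero ⟨1, hasWalkLen_one_iff.mpr huv⟩ hne
  omega

lemma Reaches.two_le_ddist (h : Reaches E u v) (hne : u ≠ v) (huv : ¬ E u v) :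
    2 ≤ ddist E u v := by
  have hne1 : ddist E u v ≠ 1 := fun h1 =>
    huv (hasWalkLen_one_iff.mp (h1 ▸ h.hasWalkLen_ddist))
  have hne0 := h.ddist_ne_zero hne
  omega

end Distance

section Resolving

variable {V : Type u} {E : V → V → Prop}

lemma not_resolves_of_ddist_eq {w u v : V} (hu : w ≠ u) (hv : w ≠ v)
    (h : Reaches E w u → Reaches E w v → ddist E w u = ddist E w v) :
    ¬ Resolves E w u v := by
  rintro (rfl | rfl | ⟨hru, hrv, hne⟩)
  exacts [hu rfl, hv rfl, hne (h hru hrv)]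

lemma not_resolvesSet_of_forall_not_resolves {R U : Set V} {u v : V} (hu : u ∈ U) (hv : v ∈ U)
    (hne : u ≠ v) (h : ∀ w ∈ R, ¬ Resolves E w u v) : ¬ ResolvesSet E R U := fun hR =>
  let ⟨w, hw, hres⟩ := hR u hu v hv hne
  h w hw hres

end Resolving

theorem stmt_8_general {V : Type u} {E : V → V → Prop}
    (hdiam : ∀ u v : V, u ≠ v → ddist E u v ≤ 2)
    {V₁ V₂ R₁ R₂ : Set V}
    (hdisj : Disjoint V₁ V₂)
    (hforward : ∀ x ∈ V₁, ∀ y ∈ V₂, E x y)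
    (hback : ∀ y ∈ V₂, ∀ x ∈ V₁, ¬ E y x)
    (hR₁ : R₁ ⊆ V₁) (hR₂ : R₂ ⊆ V₂)
    {u₁ u₂ : V} (hu₁ : u₁ ∈ V₁) (h1v : OneVertex E R₁ u₁)
    (hu₂ : u₂ ∈ V₂) (h2v : TwoVertex E R₂ u₂) :
    (∀ w ∈ R₁ ∪ R₂, ¬ Resolves E w u₁ u₂) ∧
    ¬ ResolvesSet E (R₁ ∪ R₂) (V₁ ∪ V₂) := by
  have unresolved : ∀ w ∈ R₁ ∪ R₂, ¬ Resolves E w u₁ u₂ := by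
    rintro w (hw | hw)
    · -- both distances are 1
      have hwu₁ : w ≠ u₁ := ne_of_mem_of_not_mem hw h1v.1
      have hwu₂ : w ≠ u₂ := hdisj.ne_of_mem (hR₁ hw) hu₂
      refine not_resolves_of_ddist_eq hwu₁ hwu₂ fun _ _ => ?_
      rw [ddist_eq_one hwu₁ (h1v.2 w hw), ddist_eq_one hwu₂ (hforward w (hR₁ hw) u₂ hu₂)]
    · -- both distances are 2: no edge, and the diameter is at most 2
      have hwu₁ : w ≠ u₁ := (hdisj.ne_of_mem hu₁ (hR₂ hw)).symm
      have hwu₂ : w ≠ u₂ := ne_of_mem_of_not_mem hw h2v.1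
      refine not_resolves_of_ddist_eq hwu₁ hwu₂ fun hr₁ hr₂ => ?_
      rw [le_antisymm (hdiam w u₁ hwu₁) (hr₁.two_le_ddist hwu₁ (hback w (hR₂ hw) u₁ hu₁)),
        le_antisymm (hdiam w u₂ hwu₂) (hr₂.two_le_ddist hwu₂ (h2v.2 w hw))]
  exact ⟨unresolved, not_resolvesSet_of_forall_not_resolves (.inl hu₁) (.inr hu₂)
    (hdisj.ne_of_mem hu₁ hu₂) unresolved⟩

/-- Directed join case, negative direction: a 1-vertex on the left and a
2-vertex on the right are unresolved by `R₁ ∪ R₂`. -/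
theorem stmt_8 {V : Type u} {E : V → V → Prop}
    (hsc : SConn E Set.univ)
    (hdiam : ∀ u v : V, u ≠ v → ddist E u v ≤ 2)
    {V₁ V₂ R₁ R₂ : Set V}
    (hdisj : Disjoint V₁ V₂)
    (hforward : ∀ x ∈ V₁, ∀ y ∈ V₂, E x y)
    (hback : ∀ y ∈ V₂, ∀ x ∈ V₁, ¬ E y x)
    (hR₁ : R₁ ⊆ V₁) (hR₂ : R₂ ⊆ V₂)
    (hR₁ne : R₁.Nonempty) (hR₂ne : R₂.Nonempty)
    {u₁ u₂ : V} (hu₁ : u₁ ∈ V₁) (hu₁R : u₁ ∉ R₁) (h1v : OneVertex E R₁ u₁)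
    (hu₂ : u₂ ∈ V₂) (hu₂R : u₂ ∉ R₂) (h2v : TwoVertex E R₂ u₂) :
    (∀ w ∈ R₁ ∪ R₂, ¬ Resolves E w u₁ u₂) ∧
    ¬ ResolvesSet E (R₁ ∪ R₂) (V₁ ∪ V₂) :=
  stmt_8_general hdiam hdisj hforward hback hR₁ hR₂ hu₁ h1v hu₂ h2v
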